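/- If ⟨−⟩ : C → O is a contraction on a half-balanced braided monoidal category C, then for any objects X, Y one has ⟨θ_X ⊗ θ_Y^{-1}⟩ = id_{⟨X,Y⟩} and ⟨(θ_X^2 ⊗ id_Y) β_{Y,X} β_{X,Y}⟩ = id_{⟨X,Y⟩}. -/

import Mathlib

open CategoryTheory MonoidalCategory

universe u v

variable (C : Type u) [Category.{v} C] [MonoidalCategory C] [BraidedCategory C]

/-- A half-balanced structure on a braided monoidal category: an involutive autofunctor
`*` which anti-commutes with the tensor product and is compatible with the braiding,
together with a natural family of isomorphisms `a_X : X ≅ X*` satisfying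
`a_{X⊗Y} = (a_Y ⊗ a_X) ∘ β_{X,Y}`. -/
structure HalfBalanced where
  star : C → C
  starMap : ∀ {X Y : C}, (X ⟶ Y) → (star X ⟶ star Y)
  invol : ∀ X : C, star (star X) = X
  star_tensor : ∀ X Y : C, star (X ⊗ Y) = star Y ⊗ star X
  starMap_id : ∀ X : C, starMap (𝟙 X) = 𝟙 (star X)
  starMap_comp : ∀ {X Y Z : C} (f : X ⟶ Y) (g : Y ⟶ Z),
    starMap (f ≫ g) = starMap f ≫ starMap g
  starMap_invol : ∀ {X Y : C} (f : X ⟶ Y),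
    starMap (starMap f) = eqToHom (invol X) ≫ f ≫ eqToHom (invol Y).symm
  starMap_tensor : ∀ {X X' Y Y' : C} (f : X ⟶ X') (g : Y ⟶ Y'),
    starMap (f ⊗ₘ g) =
      eqToHom (star_tensor X Y) ≫ (starMap g ⊗ₘ starMap f) ≫ eqToHom (star_tensor X' Y').symm
  star_braiding : ∀ X Y : C,
    starMap (β_ X Y).hom =
      eqToHom (star_tensor X Y) ≫ (β_ (star Y) (star X)).hom ≫ eqToHom (star_tensor Y X).symm
  a : ∀ X : C, X ≅ star X
  a_natural : ∀ {X Y : C} (f : X ⟶ Y), f ≫ (a Y).hom = (a X).hom ≫ starMap f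
  a_tensor : ∀ X Y : C,
    (a (X ⊗ Y)).hom =
      (β_ X Y).hom ≫ ((a Y).hom ⊗ₘ (a X).hom) ≫ eqToHom (star_tensor X Y).symm

variable {C}

/-- The balance induced by a half-balanced structure: `θ_X := a_{X*} ∘ a_X`. -/
def HalfBalanced.θ (hb : HalfBalanced C) (X : C) : X ≅ X :=
  hb.a X ≪≫ hb.a (hb.star X) ≪≫ eqToIso (hb.invol X)

universe w x

variable {O : Type w} [Category.{x} O]

/-- A (balanced) contraction on `C` relative to the balance induced by a half-balanced
structure: a functor `⟨-⟩ : C ⥤ O` with `⟨Y⊗X⟩ = ⟨X⊗Y⟩`, `⟨(θ_Y ⊗ id_X) β_{X,Y}⟩ = id`,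
`⟨(X⊗Y)⊗Z⟩ = ⟨X⊗(Y⊗Z)⟩` and `⟨a_{X,Y,Z}⟩ = id`. -/
structure IsBalancedContraction (hb : HalfBalanced C) (F : C ⥤ O) : Prop where
  obj_swap : ∀ X Y : C, F.obj (X ⊗ Y) = F.obj (Y ⊗ X)
  map_braid : ∀ X Y : C,
    F.map ((β_ X Y).hom ≫ ((hb.θ Y).hom ⊗ₘ 𝟙 X)) = eqToHom (obj_swap X Y)
  obj_assoc : ∀ X Y Z : C, F.obj ((X ⊗ Y) ⊗ Z) = F.obj (X ⊗ (Y ⊗ Z))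
  map_assoc : ∀ X Y Z : C, F.map (α_ X Y Z).hom = eqToHom (obj_assoc X Y Z)

/-- A contraction on a half-balanced braided monoidal category: a balanced contraction
which moreover satisfies `⟨X*⟩ = ⟨X⟩` and `⟨a_X⟩ = id_{⟨X⟩}`. -/
structure IsHalfBalancedContraction (hb : HalfBalanced C) (F : C ⥤ O)
    extends IsBalancedContraction hb F : Prop where
  obj_star : ∀ X : C, F.obj (hb.star X) = F.obj X
  map_a : ∀ X : C, F.map (hb.a X).hom = eqToHom (obj_star X).symm

/-!
The heart of the argument is the symmetry `⟨β_{X,Y}⟩ = ⟨β_{Y,X}⟩` (modulo `⟨X,Y⟩ = ⟨Y,X⟩`).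
Applying `*` and using `⟨a⟩ = id` gives `⟨β_{Y*,X*}⟩ = ⟨β_{X,Y}⟩`. The balancing axiom
expresses `⟨β_{Y*,X*}⟩` through `⟨θ_{X*} ⊗ id⟩` and `⟨β_{Y,X}⟩` through `⟨θ_X ⊗ id⟩`, and these
agree because `a_X ⊗ a_Y` intertwines `θ_X ⊗ id` with `θ_{X*} ⊗ id` while having, by the
axiom for `a_{Y⊗X}`, the same contraction as `θ_X ⊗ id`. The symmetry turns into
`⟨θ_X ⊗ id⟩ = ⟨id ⊗ θ_Y⟩`, and both identities follow from this by naturality of the braiding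
and the balancing axiom.
-/

namespace HalfBalanced

variable (hb : HalfBalanced C)

lemma starMap_eqToHom {A B : C} (h : A = B) :
    hb.starMap (eqToHom h) = eqToHom (congrArg hb.star h) := by
  subst h
  simp [hb.starMap_id]

lemma θ_hom_comp_a_hom (X : C) :
    (hb.θ X).hom ≫ (hb.a X).hom = (hb.a X).hom ≫ (hb.θ (hb.star X)).hom := by
  have h := hb.a_natural (eqToHom (hb.invol X))
  rw [starMap_eqToHom] at h
  simp [HalfBalanced.θ, h]

end HalfBalanced

namespace IsBalancedContraction

variable {hb : HalfBalanced C} {F : C ⥤ O}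

lemma map_θ_tensor_id (hF : IsBalancedContraction hb F) (X Y : C) :
    F.map ((hb.θ X).hom ⊗ₘ 𝟙 Y) = F.map (β_ Y X).inv ≫ eqToHom (hF.obj_swap Y X) := by
  rw [← hF.map_braid, F.map_comp, Iso.map_inv_hom_id_assoc]

end IsBalancedContraction

namespace IsHalfBalancedContraction

variable {hb : HalfBalanced C} {F : C ⥤ O}

lemma map_a_inv (hF : IsHalfBalancedContraction hb F) (X : C) :
    F.map (hb.a X).inv = eqToHom (hF.obj_star X) := by
  rw [← cancel_epi (F.map (hb.a X).hom), Iso.map_hom_inv_id, hF.map_a, eqToHom_trans,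
    eqToHom_refl]

lemma map_starMap (hF : IsHalfBalancedContraction hb F) {X Y : C} (f : X ⟶ Y) :
    F.map (hb.starMap f) =
      eqToHom (hF.obj_star X) ≫ F.map f ≫ eqToHom (hF.obj_star Y).symm := by
  rw [← Iso.inv_hom_id_assoc (hb.a X) (hb.starMap f), ← hb.a_natural, F.map_comp, F.map_comp,
    hF.map_a, map_a_inv hF]

lemma map_braiding_star (hF : IsHalfBalancedContraction hb F) (X Y : C) :
    F.map (β_ (hb.star Y) (hb.star X)).hom =
      eqToHom (by rw [← hb.star_tensor, hF.obj_star]) ≫ F.map (β_ X Y).hom ≫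
        eqToHom (by rw [← hb.star_tensor, hF.obj_star]) := by
  have h : (β_ (hb.star Y) (hb.star X)).hom =
      eqToHom (hb.star_tensor X Y).symm ≫ hb.starMap (β_ X Y).hom ≫
        eqToHom (hb.star_tensor Y X) := by
    simp [hb.star_braiding]
  simp [h, map_starMap hF, eqToHom_map]

lemma map_a_tensor_a (hF : IsHalfBalancedContraction hb F) (X Y : C) :
    F.map ((hb.a X).hom ⊗ₘ (hb.a Y).hom) =
      F.map ((hb.θ X).hom ⊗ₘ 𝟙 Y) ≫
        eqToHom (by rw [hF.obj_swap, ← hF.obj_star, hb.star_tensor]) := by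
  have h : (hb.a X).hom ⊗ₘ (hb.a Y).hom =
      (β_ Y X).inv ≫ (hb.a (Y ⊗ X)).hom ≫ eqToHom (hb.star_tensor Y X) := by
    simp [hb.a_tensor]
  rw [hF.map_θ_tensor_id, h]
  simp [hF.map_a, eqToHom_map]

lemma map_θ_star_tensor_id (hF : IsHalfBalancedContraction hb F) (X Y : C) :
    F.map ((hb.θ (hb.star X)).hom ⊗ₘ 𝟙 (hb.star Y)) =
      eqToHom (by rw [← hb.star_tensor, hF.obj_star, hF.obj_swap]) ≫
        F.map ((hb.θ X).hom ⊗ₘ 𝟙 Y) ≫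
          eqToHom (by rw [hF.obj_swap, ← hF.obj_star, hb.star_tensor]) := by
  have h := congrArg F.map (tensorHom_comp_tensorHom (hb.a X).hom (hb.a Y).hom
    (hb.θ (hb.star X)).hom (𝟙 _))
  rw [Category.comp_id, ← hb.θ_hom_comp_a_hom, ← Category.id_comp (hb.a Y).hom,
    ← tensorHom_comp_tensorHom, Category.id_comp, F.map_comp, F.map_comp,
    map_a_tensor_a hF, Category.assoc, cancel_epi, eqToHom_comp_iff] at h
  exact h

lemma map_braiding_symm (hF : IsHalfBalancedContraction hb F) (X Y : C) :
    F.map (β_ X Y).hom = eqToHom (hF.obj_swap X Y) ≫ F.map (β_ Y X).hom ≫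
      eqToHom (hF.obj_swap X Y) := by
  have h := hF.map_braid (hb.star Y) (hb.star X)
  rw [F.map_comp, map_braiding_star hF, map_θ_star_tensor_id hF, hF.map_θ_tensor_id] at h
  simp only [Category.assoc, eqToHom_trans_assoc, eqToHom_comp_iff, eqToHom_trans] at h
  simp only [← Category.assoc, comp_eqToHom_iff, eqToHom_trans] at h
  rw [← Functor.mapIso_inv, Iso.comp_inv_eq, comp_eqToHom_iff] at h
  simp [h]

lemma map_θ_tensor_id_eq_map_id_tensor_θ (hF : IsHalfBalancedContraction hb F) (X Y : C) :
    F.map ((hb.θ X).hom ⊗ₘ 𝟙 Y) = F.map (𝟙 X ⊗ₘ (hb.θ Y).hom) := by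
  have h : 𝟙 X ⊗ₘ (hb.θ Y).hom =
      (β_ X Y).hom ≫ ((hb.θ Y).hom ⊗ₘ 𝟙 X) ≫ (β_ X Y).inv := by
    rw [← BraidedCategory.braiding_naturality_assoc, Iso.hom_inv_id, Category.comp_id]
  rw [h, ← Category.assoc, F.map_comp, hF.map_braid, hF.map_θ_tensor_id,
    ← cancel_epi (F.map (β_ Y X).hom), Iso.map_hom_inv_id_assoc, map_braiding_symm hF Y X]
  simp

end IsHalfBalancedContraction

/-- If `⟨-⟩ : C ⥤ O` is a contraction on a half-balanced braided monoidal category, then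
for any objects `X, Y` one has `⟨θ_X ⊗ θ_Y⁻¹⟩ = id_{⟨X,Y⟩}` and
`⟨(θ_X² ⊗ id_Y) β_{Y,X} β_{X,Y}⟩ = id_{⟨X,Y⟩}`. -/
theorem halfBalancedContraction_theta (hb : HalfBalanced C) (F : C ⥤ O)
    (hF : IsHalfBalancedContraction hb F) (X Y : C) :
    F.map ((hb.θ X).hom ⊗ₘ (hb.θ Y).inv) = 𝟙 (F.obj (X ⊗ Y)) ∧
    F.map ((β_ X Y).hom ≫ (β_ Y X).hom ≫ (((hb.θ X).hom ≫ (hb.θ X).hom) ⊗ₘ 𝟙 Y)) =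
      𝟙 (F.obj (X ⊗ Y)) := by
  constructor
  · calc F.map ((hb.θ X).hom ⊗ₘ (hb.θ Y).inv)
        = F.map ((hb.θ X).hom ⊗ₘ 𝟙 Y) ≫ F.map (𝟙 X ⊗ₘ (hb.θ Y).inv) := by
          rw [← F.map_comp, tensorHom_comp_tensorHom, Category.comp_id, Category.id_comp]
      _ = F.map (𝟙 X ⊗ₘ (hb.θ Y).hom) ≫ F.map (𝟙 X ⊗ₘ (hb.θ Y).inv) := by
          rw [hF.map_θ_tensor_id_eq_map_id_tensor_θ]
      _ = 𝟙 (F.obj (X ⊗ Y)) := by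
          rw [← F.map_comp, tensorHom_comp_tensorHom, Iso.hom_inv_id, Category.comp_id,
            id_tensorHom_id, F.map_id]
  · have hsplit :
        (β_ X Y).hom ≫ (β_ Y X).hom ≫ (((hb.θ X).hom ≫ (hb.θ X).hom) ⊗ₘ 𝟙 Y) =
          ((β_ X Y).hom ≫ (𝟙 Y ⊗ₘ (hb.θ X).hom)) ≫ (β_ Y X).hom ≫ ((hb.θ X).hom ⊗ₘ 𝟙 Y) := by
      rw [Category.assoc, BraidedCategory.braiding_naturality_assoc, tensorHom_comp_tensorHom,
        Category.comp_id]
    rw [hsplit, F.map_comp, F.map_comp (β_ X Y).hom, ← hF.map_θ_tensor_id_eq_map_id_tensor_θ,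
      ← F.map_comp, hF.map_braid, hF.map_braid, eqToHom_trans, eqToHom_refl]
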